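/- arXiv:1202.4194 — 3 statements merged into one kernel-verified Lean document; each statement's English description precedes it below -/
import Mathlib

section
/- Let p ≥ 3 be a prime and n ≥ 1. Every nontrivial complex representation of the group SL₂(ℤ/p^nℤ) has degree at least (p−1)/2; that is, if ρ : SL₂(ℤ/p^nℤ) → GL_d(ℂ) is a group homomorphism which is not identically the identity matrix, then d ≥ (p−1)/2. -/
/-!
Over a local ring, `SL₂` is generated by the upper and lower unitriangular matrices, and these are
conjugate under the Weyl element; so `ρ` is nontrivial on some upper unitriangular `u`. Since
`u ^ pⁿ = 1`, `ρ u` is semisimple, hence has an eigenvalue `ζ ≠ 1` with `ζ ^ pⁿ = 1`, and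
`p ∣ orderOf ζ`. Conjugation by `diag(t, t⁻¹)` sends `u` to `u ^ t²`, so each `ζ ^ t²` is again an
eigenvalue of `ρ u`; for `1 ≤ t ≤ (p - 1) / 2` the squares `t²` are distinct modulo `p`, which gives
`(p - 1) / 2` distinct eigenvalues.
-/

open Matrix
open scoped MatrixGroups

lemma ZMod.isLocalRing_prime_pow (p : ℕ) [hp : Fact p.Prime] {n : ℕ} (hn : n ≠ 0) :
    IsLocalRing (ZMod (p ^ n)) :=
  have : Fact (1 < p ^ n) := ⟨Nat.one_lt_pow hn hp.out.one_lt⟩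
  IsLocalRing.of_surjective' (PadicInt.toZModPow n) (ZMod.ringHom_surjective _)

lemma spectrum.pow_mem_of_units_conj {K A : Type*} [Field K] [Ring A] [Algebra K A] {a : A}
    {u : Aˣ} {k : ℕ} (h : ↑u * a * ↑u⁻¹ = a ^ k) {μ : K} (hμ : μ ∈ spectrum K a) :
    μ ^ k ∈ spectrum K a := by
  rw [← spectrum.units_conjugate (u := u), h]
  exact spectrum.pow_mem_pow a k hμ

namespace SL2

variable {R : Type*} [CommRing R]

def upper (x : R) : SL(2, R) := ⟨!![1, x; 0, 1], by simp⟩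

def lower (x : R) : SL(2, R) := ⟨!![1, 0; x, 1], by simp⟩

def weyl : SL(2, R) := ⟨!![0, -1; 1, 0], by simp⟩

def diag (t : Rˣ) : SL(2, R) := ⟨!![(t : R), 0; 0, (t⁻¹ : Rˣ)], by simp⟩

@[simp] lemma coe_upper (x : R) : (upper x : Matrix (Fin 2) (Fin 2) R) = !![1, x; 0, 1] := rfl

@[simp] lemma coe_lower (x : R) : (lower x : Matrix (Fin 2) (Fin 2) R) = !![1, 0; x, 1] := rfl

@[simp] lemma coe_weyl : ((weyl : SL(2, R)) : Matrix (Fin 2) (Fin 2) R) = !![0, -1; 1, 0] := rfl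

@[simp] lemma coe_diag (t : Rˣ) :
    (diag t : Matrix (Fin 2) (Fin 2) R) = !![(t : R), 0; 0, (t⁻¹ : Rˣ)] := rfl

lemma upper_add (x y : R) : upper (x + y) = upper x * upper y := by
  apply Subtype.ext; simp [add_comm]

lemma upper_zero : upper (0 : R) = 1 := by
  apply Subtype.ext; simp [Matrix.one_fin_two]

lemma upper_pow (x : R) (k : ℕ) : upper x ^ k = upper (k * x) := by
  induction k with
  | zero => simp [upper_zero]
  | succ k ih => rw [pow_succ, ih, ← upper_add, Nat.cast_succ, add_one_mul]

lemma upper_pow_eq_one {N : ℕ} (hN : (N : R) = 0) (x : R) : upper x ^ N = 1 := by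
  rw [upper_pow, hN, zero_mul, upper_zero]

lemma weyl_mul_upper_mul_inv (x : R) : weyl * upper x * weyl⁻¹ = lower (-x) := by
  rw [mul_inv_eq_iff_eq_mul]
  apply Subtype.ext; simp

lemma diag_mul_upper_mul_inv (t : Rˣ) (x : R) :
    diag t * upper x * (diag t)⁻¹ = upper (t * t * x) := by
  rw [mul_inv_eq_iff_eq_mul]
  apply Subtype.ext
  simp [mul_right_comm _ x]

lemma exists_eq_upper_mul_lower_mul_upper (M : SL(2, R)) (hM : IsUnit (M 1 0)) :
    ∃ a b c, M = upper a * lower b * upper c := by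
  obtain ⟨u, hu⟩ := hM
  have hdet : M 0 0 * M 1 1 - M 0 1 * M 1 0 = 1 := by rw [← det_fin_two]; exact M.2
  refine ⟨(M 0 0 - 1) * ↑u⁻¹, u, (M 1 1 - 1) * ↑u⁻¹, ?_⟩
  have hinv : (u : R) * ↑u⁻¹ = 1 := u.mul_inv
  ext i j
  fin_cases i <;> fin_cases j <;> simp
  · linear_combination (-M 0 1) * hinv + (↑u⁻¹ * M 0 1) * hu - ↑u⁻¹ * hdet
  · exact hu.symm
  · linear_combination (1 - M 1 1) * hinv

lemma exists_isUnit_lower_mul_apply_one_zero [IsLocalRing R] (M : SL(2, R)) :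
    ∃ s, IsUnit ((lower s * M : SL(2, R)) 1 0) := by
  have hdet : M 0 0 * M 1 1 + -(M 0 1 * M 1 0) = 1 := by
    rw [← sub_eq_add_neg, ← det_fin_two]; exact M.2
  rcases IsLocalRing.isUnit_or_isUnit_of_isUnit_add (hdet ▸ isUnit_one) with h | h
  · obtain ⟨u, hu⟩ := isUnit_of_mul_isUnit_left h
    refine ⟨(1 - M 1 0) * ↑u⁻¹, ?_⟩
    simp [mul_apply, ← hu]
  · refine ⟨0, ?_⟩
    simpa [mul_apply] using isUnit_of_mul_isUnit_right ((IsUnit.neg_iff _).mp h)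

variable {G : Type*} [Group G]

lemma map_lower_eq_one {φ : SL(2, R) →* G} (hφ : ∀ x, φ (upper x) = 1) (x : R) :
    φ (lower x) = 1 := by
  rw [← neg_neg x, ← weyl_mul_upper_mul_inv, map_mul, map_mul, hφ, mul_one, map_inv,
    mul_inv_cancel]

lemma eq_one_of_map_upper [IsLocalRing R] {φ : SL(2, R) →* G} (hφ : ∀ x, φ (upper x) = 1) :
    φ = 1 := by
  ext M
  obtain ⟨s, hs⟩ := exists_isUnit_lower_mul_apply_one_zero M
  obtain ⟨a, b, c, habc⟩ := exists_eq_upper_mul_lower_mul_upper _ hs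
  calc φ M = φ (lower s * M) := by rw [map_mul, map_lower_eq_one hφ, one_mul]
    _ = 1 := by rw [habc, map_mul, map_mul, hφ, hφ, map_lower_eq_one hφ, one_mul, one_mul]

lemma pow_sq_mem_spectrum_map_upper {K A : Type*} [Field K] [Ring A] [Algebra K A]
    (ρ : SL(2, R) →* Aˣ) (x : R) {t : ℕ} (ht : IsUnit (t : R)) {μ : K}
    (hμ : μ ∈ spectrum K (ρ (upper x) : A)) :
    μ ^ t ^ 2 ∈ spectrum K (ρ (upper x) : A) := by
  obtain ⟨u, hu⟩ := ht
  refine spectrum.pow_mem_of_units_conj (u := ρ (diag u)) ?_ hμ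
  rw [← Units.val_mul, ← Units.val_mul, ← map_inv, ← map_mul, ← map_mul,
    diag_mul_upper_mul_inv, ← Units.val_pow_eq_pow_val, ← map_pow, upper_pow, hu, Nat.cast_pow, sq]

end SL2

lemma Module.End.exists_mem_spectrum_ne_one_of_pow_eq_one {K V : Type*} [Field K] [IsAlgClosed K]
    [AddCommGroup V] [Module K V] [FiniteDimensional K V] {f : Module.End K V} {N : ℕ}
    (hN : (N : K) ≠ 0) (hfN : f ^ N = 1) (hf : f ≠ 1) : ∃ μ ∈ spectrum K f, μ ≠ 1 := by
  have hss : f.IsSemisimple := isSemisimple_of_squarefree_aeval_eq_zero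
    (Polynomial.X_pow_sub_one_separable_iff.mpr hN).squarefree (by simp [hfN])
  by_contra! h
  have hss' : (f - algebraMap K (Module.End K V) 1).IsSemisimple :=
    isSemisimple_sub_algebraMap_iff.mpr hss
  have hzero : f - algebraMap K (Module.End K V) 1 = 0 :=
    hss'.eq_zero_iff_forall_eigenvalue.mpr fun μ hμ => by
      rw [Module.algebraMap_end_eq_smul_id, hasEigenvalue_sub_iff] at hμ
      simpa using h _ hμ.mem_spectrum
  exact hf (by simpa [sub_eq_zero] using hzero)

lemma Matrix.exists_mem_spectrum_ne_one_of_pow_eq_one {n K : Type*} [Fintype n] [DecidableEq n]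
    [Field K] [IsAlgClosed K] {A : Matrix n n K} {N : ℕ} (hN : (N : K) ≠ 0) (hAN : A ^ N = 1)
    (hA : A ≠ 1) : ∃ μ ∈ spectrum K A, μ ≠ 1 ∧ μ ^ N = 1 := by
  obtain ⟨μ, hμA, hμ1⟩ : ∃ μ ∈ spectrum K A, μ ≠ 1 := by
    simpa only [AlgEquiv.spectrum_eq] using
      Module.End.exists_mem_spectrum_ne_one_of_pow_eq_one (f := toLinAlgEquiv' A) hN
        (by rw [← map_pow, hAN, map_one])
        (by rwa [ne_eq, ← map_one toLinAlgEquiv', toLinAlgEquiv'.injective.eq_iff])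
  have := nontrivial_of_ne A 1 hA
  exact ⟨μ, hμA, hμ1, by simpa [hAN, spectrum.one_eq] using spectrum.pow_mem_pow A N hμA⟩

lemma Matrix.card_le_of_coe_subset_spectrum {n K : Type*} [Fintype n] [DecidableEq n] [Field K]
    {A : Matrix n n K} {s : Finset K} (hs : ↑s ⊆ spectrum K A) : s.card ≤ Fintype.card n := by
  classical
  calc s.card ≤ A.charpoly.roots.toFinset.card := Finset.card_le_card fun μ hμ => by
        rw [Multiset.mem_toFinset, Polynomial.mem_roots A.charpoly_monic.ne_zero,
          ← mem_spectrum_iff_isRoot_charpoly]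
        exact hs hμ
    _ ≤ Multiset.card A.charpoly.roots := Multiset.toFinset_card_le _
    _ ≤ A.charpoly.natDegree := Polynomial.card_roots' _
    _ = Fintype.card n := A.charpoly_natDegree_eq_dim

lemma injOn_pow_sq_Icc_of_pow_prime_pow_eq_one {M : Type*} [Monoid M] {x : M} {p n : ℕ}
    (hp : p.Prime) (hx : x ^ p ^ n = 1) (hx1 : x ≠ 1) :
    Set.InjOn (fun t : ℕ => x ^ t ^ 2) (Set.Icc 1 ((p - 1) / 2)) := by
  have hfin : IsOfFinOrder x := isOfFinOrder_iff_pow_eq_one.mpr ⟨p ^ n, pow_pos hp.pos n, hx⟩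
  have hdvd : p ∣ orderOf x := by
    by_contra h
    exact hx1 (orderOf_eq_one_iff.mp (Nat.Coprime.eq_one_of_dvd
      ((hp.coprime_iff_not_dvd.mpr h).symm.pow_right n) (orderOf_dvd_of_pow_eq_one hx)))
  intro a ha b hb hab
  have := Fact.mk hp
  have hsq : (a : ZMod p) ^ 2 = (b : ZMod p) ^ 2 := by
    exact_mod_cast (ZMod.natCast_eq_natCast_iff _ _ _).mpr
      ((hfin.pow_eq_pow_iff_modEq.mp hab).of_dvd hdvd)
  simp only [Set.mem_Icc] at ha hb
  rcases sq_eq_sq_iff_eq_or_eq_neg.mp hsq with h | h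
  · rw [ZMod.natCast_eq_natCast_iff'] at h
    rwa [Nat.mod_eq_of_lt (by omega), Nat.mod_eq_of_lt (by omega)] at h
  · have : p ∣ a + b := (ZMod.natCast_eq_zero_iff _ _).mp (by push_cast; rw [h, neg_add_cancel])
    have := Nat.le_of_dvd (by omega) this
    omega

theorem sl2_nontrivial_rep_dim_lower_bound_general
    (p n d : ℕ) (hp : p.Prime) (hp3 : 3 ≤ p) (hn : 1 ≤ n)
    (ρ : Matrix.SpecialLinearGroup (Fin 2) (ZMod (p ^ n)) →* GL (Fin d) ℂ)
    (hnt : ∃ g, ρ g ≠ 1) :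
    ((p : ℝ) - 1) / 2 ≤ d := by
  have := Fact.mk hp
  have := ZMod.isLocalRing_prime_pow p (n := n) (by omega)
  obtain ⟨x, hx⟩ : ∃ x, ρ (SL2.upper x) ≠ 1 := by
    by_contra! h
    obtain ⟨g, hg⟩ := hnt
    exact hg (by rw [SL2.eq_one_of_map_upper h]; rfl)
  set A : Matrix (Fin d) (Fin d) ℂ := ↑(ρ (SL2.upper x))
  have hA : A ^ p ^ n = 1 := by
    rw [← Units.val_pow_eq_pow_val, ← map_pow, SL2.upper_pow_eq_one (ZMod.natCast_self _),
      map_one, Units.val_one]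
  obtain ⟨ζ, hζA, hζ1, hζ⟩ := Matrix.exists_mem_spectrum_ne_one_of_pow_eq_one
    (by exact_mod_cast (pow_pos hp.pos n).ne') hA fun h => hx (Units.ext h)
  have hsub : ↑((Finset.Icc 1 ((p - 1) / 2)).image fun t => ζ ^ t ^ 2) ⊆ spectrum ℂ A := by
    simp only [Finset.coe_image, Finset.coe_Icc, Set.image_subset_iff]
    rintro t ⟨ht1, ht2⟩
    refine SL2.pow_sq_mem_spectrum_map_upper ρ x ?_ hζA
    exact (ZMod.isUnit_iff_coprime t (p ^ n)).mpr
      ((Nat.coprime_of_lt_prime (by omega) (by omega) hp).symm.pow_right n)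
  have hcard := Matrix.card_le_of_coe_subset_spectrum hsub
  rw [Finset.card_image_of_injOn (by
      rw [Finset.coe_Icc]; exact injOn_pow_sq_Icc_of_pow_prime_pow_eq_one hp hζ hζ1),
    Nat.card_Icc, Fintype.card_fin] at hcard
  obtain ⟨k, rfl⟩ := hp.odd_of_ne_two (by omega)
  have : ((2 * k + 1 : ℕ) : ℝ) ≤ 2 * d + 1 := by exact_mod_cast (by omega : 2 * k + 1 ≤ 2 * d + 1)
  linarith

/-- Every nontrivial complex representation of `SL₂(ℤ/pⁿℤ)` (p ≥ 3 prime, n ≥ 1)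
has degree at least `(p - 1)/2`. -/
theorem sl2_nontrivial_rep_dim_lower_bound
    (p n d : ℕ) (hp : p.Prime) (hp3 : 3 ≤ p) (hn : 1 ≤ n) (hd : 1 ≤ d)
    (ρ : Matrix.SpecialLinearGroup (Fin 2) (ZMod (p ^ n)) →* GL (Fin d) ℂ)
    (hnt : ∃ g, ρ g ≠ 1) :
    ((p : ℝ) - 1) / 2 ≤ d :=
  sl2_nontrivial_rep_dim_lower_bound_general p n d hp hp3 hn ρ hnt
end

section
/- Let p ≥ 3 be a prime and n ≥ 1. Every faithful complex representation of the group SL₂(ℤ/p^nℤ) has degree at least (p^n − p^{n−1})/2; that is, if ρ : SL₂(ℤ/p^nℤ) → GL_d(ℂ) is an injective group homomorphism, then d ≥ (p^n − p^{n−1})/2. -/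
/-!
The unipotent `u = !![1, 1; 0, 1]` has order `N = pⁿ` in `SL₂(ℤ/N)`, and conjugation by
`!![t, 0; 0, t⁻¹]` sends it to `u ^ t²`. A faithful representation maps `u` to an endomorphism of
order `N`; as `X ^ N - 1` is separable over `ℂ`, one of its eigenvalues is a primitive `N`-th root
of unity `ζ`, and then every `ζ ^ t²` with `t ∈ (ℤ/N)ˣ` is an eigenvalue too. These are distinct
for distinct squares `t²`, and since `(ℤ/pⁿ)ˣ` is cyclic for odd `p`, the squares number at least
`φ(pⁿ) / 2 = (pⁿ - pⁿ⁻¹) / 2`.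
-/

open Matrix Polynomial Module

namespace Matrix.SpecialLinearGroup

variable {R : Type*} [CommRing R]

def upperRightHom : Multiplicative R →* SpecialLinearGroup (Fin 2) R where
  toFun a := ⟨!![1, a.toAdd; 0, 1], by simp [det_fin_two_of]⟩
  map_one' := Subtype.ext <| by simp [one_fin_two]
  map_mul' a b := Subtype.ext <| (by simp [add_comm] :
    !![1, (a * b).toAdd; 0, 1] = !![1, a.toAdd; 0, 1] * !![1, b.toAdd; 0, 1])

lemma injective_upperRightHom : Function.Injective (upperRightHom (R := R)) :=
  fun _ _ h ↦ congr_arg (fun g : SpecialLinearGroup (Fin 2) R ↦ g 0 1) h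

lemma isConj_upperRightHom (t : Rˣ) (a : R) :
    IsConj (upperRightHom (.ofAdd a)) (upperRightHom (.ofAdd ((t : R) ^ 2 * a))) := by
  refine isConj_iff.mpr ⟨⟨!![(t : R), 0; 0, ↑t⁻¹], by simp [det_fin_two_of]⟩,
    mul_inv_eq_iff_eq_mul.mpr (Subtype.ext ?_)⟩
  exact (by simp [sq, mul_assoc, mul_left_comm (t : R) a] :
    !![(t : R), 0; 0, ↑t⁻¹] * !![1, a; 0, 1] =
      !![1, (t : R) ^ 2 * a; 0, 1] * !![(t : R), 0; 0, ↑t⁻¹])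

lemma upperRightHom_ofAdd_eq_pow {N : ℕ} [NeZero N] (a : ZMod N) :
    upperRightHom (.ofAdd a) = upperRightHom (.ofAdd 1) ^ a.val := by
  rw [← map_pow, ← ofAdd_nsmul, nsmul_one, ZMod.natCast_zmod_val]

lemma orderOf_upperRightHom_ofAdd_one (N : ℕ) :
    orderOf (upperRightHom (.ofAdd (1 : ZMod N))) = N := by
  rw [orderOf_injective _ injective_upperRightHom, orderOf_ofAdd_eq_addOrderOf,
    ZMod.addOrderOf_one]

end Matrix.SpecialLinearGroup

lemma IsCyclic.card_le_two_mul_card_range_sq {G : Type*} [CommGroup G] [IsCyclic G] [Finite G] :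
    Nat.card G ≤ 2 * Nat.card (powMonoidHom 2 : G →* G).range := by
  rw [IsCyclic.card_powMonoidHom_range]
  calc Nat.card G = (Nat.card G).gcd 2 * (Nat.card G / (Nat.card G).gcd 2) :=
        (Nat.mul_div_cancel' (Nat.gcd_dvd_left _ _)).symm
    _ ≤ 2 * (Nat.card G / (Nat.card G).gcd 2) :=
        Nat.mul_le_mul_right _ (Nat.gcd_le_right _ two_pos)

namespace Module.End

variable {K V : Type*} [Field K] [AddCommGroup V] [Module K V]

lemma HasEigenvalue.pow_eq_one {f : End K V} {μ : K} (hμ : f.HasEigenvalue μ) {N : ℕ}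
    (hf : f ^ N = 1) : μ ^ N = 1 := by
  obtain ⟨v, hv⟩ := hμ.exists_hasEigenvector
  have hv' := hv.pow_apply N
  rw [hf, one_apply] at hv'
  exact smul_left_injective K hv.2 (by simpa using hv'.symm)

variable [FiniteDimensional K V]

lemma HasEigenvalue.of_isConj {f g : End K V} (h : IsConj f g) {μ : K}
    (hμ : f.HasEigenvalue μ) : g.HasEigenvalue μ := by
  obtain ⟨c, hc⟩ := h
  rw [hasEigenvalue_iff_mem_spectrum] at hμ ⊢
  rwa [(Units.eq_mul_inv_iff_mul_eq c).mpr hc.eq.symm, spectrum.units_conjugate]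

lemma natCard_hasEigenvalue_le_finrank (f : End K V) :
    Nat.card {μ | f.HasEigenvalue μ} ≤ finrank K V := by
  choose v hv using fun μ : {μ | f.HasEigenvalue μ} ↦ μ.2.exists_hasEigenvector
  have := f.finite_hasEigenvalue.fintype
  rw [Nat.card_eq_fintype_card]
  exact (eigenvectors_linearIndependent' f Subtype.val Subtype.val_injective v hv
    ).fintype_card_le_finrank

lemma exists_hasEigenvalue_pow_ne_one [IsAlgClosed K] {f : End K V} {N m : ℕ}
    (hN : (N : K) ≠ 0) (hfN : f ^ N = 1) (hfm : f ^ m ≠ 1) :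
    ∃ μ, f.HasEigenvalue μ ∧ μ ^ m ≠ 1 := by
  by_contra! h
  have hm : 0 < m := Nat.pos_of_ne_zero <| by rintro rfl; exact hfm (pow_zero f)
  have hsep : (minpoly K f).Separable :=
    (separable_X_pow_sub_C 1 hN one_ne_zero).of_dvd (minpoly.dvd K f (by simp [hfN]))
  -- A split polynomial with simple roots divides every polynomial vanishing at those roots.
  have hdvd : minpoly K f ∣ X ^ m - C 1 := by
    refine (IsAlgClosed.splits _).dvd_of_roots_le_roots
      (minpoly.ne_zero (Algebra.IsIntegral.isIntegral f)) ?_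
    refine (Multiset.le_iff_subset (nodup_roots hsep)).mpr fun μ hμ ↦ ?_
    exact (mem_nthRoots hm).mpr (h μ (hasEigenvalue_iff_isRoot.mpr (isRoot_of_mem_roots hμ)))
  exact hfm (by simpa [sub_eq_zero] using minpoly.dvd_iff.mp hdvd)

lemma exists_hasEigenvalue_isPrimitiveRoot [IsAlgClosed K] {f : End K V} {p n : ℕ}
    [hp : Fact p.Prime] (hpK : (p : K) ≠ 0) (hf : orderOf f = p ^ (n + 1)) :
    ∃ ζ, f.HasEigenvalue ζ ∧ IsPrimitiveRoot ζ (p ^ (n + 1)) := by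
  have hfN : f ^ p ^ (n + 1) = 1 := hf ▸ pow_orderOf_eq_one f
  obtain ⟨ζ, hζ, hζn⟩ := exists_hasEigenvalue_pow_ne_one (by exact_mod_cast pow_ne_zero _ hpK)
    hfN (pow_ne_one_of_lt_orderOf (pow_ne_zero _ hp.out.ne_zero)
      (hf ▸ Nat.pow_lt_pow_succ (n := n) hp.out.one_lt))
  exact ⟨ζ, hζ, IsPrimitiveRoot.iff_orderOf.mpr (orderOf_eq_prime_pow hζn (hζ.pow_eq_one hfN))⟩

end Module.End

open Matrix.SpecialLinearGroup Module.End in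
theorem totient_prime_pow_le_two_mul_finrank_of_injective {K V : Type*} [Field K] [IsAlgClosed K]
    [CharZero K] [AddCommGroup V] [Module K V] [FiniteDimensional K V] {p : ℕ} [hp : Fact p.Prime]
    (hp2 : p ≠ 2) (n : ℕ) (σ : SpecialLinearGroup (Fin 2) (ZMod (p ^ (n + 1))) →* End K V)
    (hσ : Function.Injective σ) :
    (p ^ (n + 1)).totient ≤ 2 * finrank K V := by
  have := ZMod.isCyclic_units_of_prime_pow p hp.out hp2 (n + 1)
  set u := upperRightHom (.ofAdd (1 : ZMod (p ^ (n + 1))))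
  obtain ⟨ζ, hζ, hζprim⟩ := exists_hasEigenvalue_isPrimitiveRoot (f := σ u)
    (by exact_mod_cast hp.out.ne_zero)
    (by rw [orderOf_injective σ hσ, orderOf_upperRightHom_ofAdd_one])
  have hζsq (t : (ZMod (p ^ (n + 1)))ˣ) :
      (σ u).HasEigenvalue (ζ ^ ((t ^ 2 : (ZMod (p ^ (n + 1)))ˣ) : ZMod (p ^ (n + 1))).val) := by
    have h := σ.map_isConj (isConj_upperRightHom t 1)
    rw [mul_one, upperRightHom_ofAdd_eq_pow ((t : ZMod (p ^ (n + 1))) ^ 2), map_pow] at h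
    rw [Units.val_pow_eq_pow_val]
    exact (hζ.pow _).of_isConj h.symm
  let φ (s : (powMonoidHom 2 : (ZMod (p ^ (n + 1)))ˣ →* _).range) :
      {μ | (σ u).HasEigenvalue μ} :=
    ⟨ζ ^ ((s : (ZMod (p ^ (n + 1)))ˣ) : ZMod (p ^ (n + 1))).val,
      by obtain ⟨t, ht⟩ := s.2; rw [← ht]; exact hζsq t⟩
  have hφ : Function.Injective φ := fun s s' h ↦ Subtype.ext <| Units.ext <|
    ZMod.val_injective _ <| hζprim.pow_inj (ZMod.val_lt _) (ZMod.val_lt _) (congr_arg Subtype.val h)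
  have : Finite {μ | (σ u).HasEigenvalue μ} := (σ u).finite_hasEigenvalue
  calc (p ^ (n + 1)).totient = Nat.card (ZMod (p ^ (n + 1)))ˣ := by
        rw [Nat.card_eq_fintype_card, ZMod.card_units_eq_totient]
    _ ≤ 2 * Nat.card (powMonoidHom 2 : (ZMod (p ^ (n + 1)))ˣ →* _).range :=
        IsCyclic.card_le_two_mul_card_range_sq
    _ ≤ 2 * Nat.card {μ | (σ u).HasEigenvalue μ} :=
        Nat.mul_le_mul_left 2 (Nat.card_le_card_of_injective φ hφ)
    _ ≤ 2 * finrank K V := Nat.mul_le_mul_left 2 (natCard_hasEigenvalue_le_finrank _)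

theorem sl2_faithful_rep_dim_lower_bound_general
    (p n d : ℕ) (hp : p.Prime) (hp3 : 3 ≤ p) (hn : 1 ≤ n)
    (ρ : Matrix.SpecialLinearGroup (Fin 2) (ZMod (p ^ n)) →* GL (Fin d) ℂ)
    (hinj : Function.Injective ρ) :
    ((p : ℝ) ^ n - (p : ℝ) ^ (n - 1)) / 2 ≤ d := by
  have := Fact.mk hp
  obtain ⟨m, rfl⟩ : ∃ m, n = m + 1 := ⟨n - 1, by omega⟩
  have hbound := totient_prime_pow_le_two_mul_finrank_of_injective (by omega : p ≠ 2) m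
    ((Units.coeHom _).comp (GeneralLinearGroup.toLin.toMonoidHom.comp ρ))
    (Units.val_injective.comp (GeneralLinearGroup.toLin.injective.comp hinj))
  rw [finrank_fin_fun, Nat.totient_prime_pow_succ hp] at hbound
  have hbound_real : ((p ^ m * (p - 1) : ℕ) : ℝ) ≤ 2 * d := by exact_mod_cast hbound
  rw [Nat.cast_mul, Nat.cast_sub hp.one_le] at hbound_real
  rw [Nat.add_sub_cancel, div_le_iff₀ two_pos]
  push_cast at hbound_real
  linear_combination hbound_real

/-- Every faithful complex representation of `SL₂(ℤ/pⁿℤ)` (p ≥ 3 prime, n ≥ 1)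
has degree at least `(pⁿ - pⁿ⁻¹)/2`. -/
theorem sl2_faithful_rep_dim_lower_bound
    (p n d : ℕ) (hp : p.Prime) (hp3 : 3 ≤ p) (hn : 1 ≤ n) (hd : 1 ≤ d)
    (ρ : Matrix.SpecialLinearGroup (Fin 2) (ZMod (p ^ n)) →* GL (Fin d) ℂ)
    (hinj : Function.Injective ρ) :
    ((p : ℝ) ^ n - (p : ℝ) ^ (n - 1)) / 2 ≤ d :=
  sl2_faithful_rep_dim_lower_bound_general p n d hp hp3 hn ρ hinj
end

section
/- For every k ≥ 1, the supremal measure of a measurable sum-free subset of the k-dimensional torus 𝕋^k = (ℝ/ℤ)^k equals 1/3; that is, sup{ μ(A) : A ⊆ 𝕋^k measurable and (A + A) ∩ A = ∅ } = 1/3, where μ is the normalized Haar (Lebesgue) measure on 𝕋^k. -/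
open MeasureTheory
open scoped ENNReal Pointwise

/-!
Upper bound. By inner regularity it suffices to bound a compact `K` with `K + K` disjoint from
`K`; then `K` and `K + K` are at some positive distance `δ`. Split the torus `𝕋^ι` into the
`n ^ |ι|` closed cells of side `1/n` indexed by `G = (ℤ/n)^ι`. Since `cell s + cell t` contains
`cell (s + t + e)` for every lattice point `e` of the box `[0, 1/n]^ι`, the set `S` of cells
meeting `K` satisfies `(S + S + E) ∩ S = ∅` as soon as `2/n ≤ δ`, where `E` is the set of those
lattice points. As `E ∋ 0` generates `G`, the Dyson e-transform gives the Cauchy–Davenport type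
bound `|S + T + E| ≥ min(|G|, |S| + |T|)` for `0 ∈ T`; taking `T = S - s` yields `3|S| ≤ |G|`,
so `μ K ≤ |S| / |G| ≤ 1/3`.

Lower bound. The points whose first coordinate is within `1/6` of `1/2` form a sum-free set of
measure `1/3`.
-/

namespace TorusSumFree

section SmoothedCauchyDavenport

open Finset

variable {G : Type*} [AddCommGroup G] [DecidableEq G] {E S T : Finset G}

theorem vadd_finset_eq_self_of_add_subset {a : G} (ha : a ∈ T) (hST : S + T ⊆ S) :
    a +ᵥ S = S :=
  eq_of_subset_of_card_le ((vadd_finset_subset_add ha).trans (add_comm T S ▸ hST))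
    (card_vadd_finset a S).ge

variable [Fintype G]

theorem eq_univ_of_add_subset (hE : AddSubgroup.closure (E : Set G) = ⊤) (hS : S.Nonempty)
    (hSE : S + E ⊆ S) : S = univ := by
  have hstab : AddSubgroup.closure (E : Set G) ≤ AddAction.stabilizer G S :=
    (AddSubgroup.closure_le _).2 fun _ he ↦
      AddAction.mem_stabilizer_iff.2 (vadd_finset_eq_self_of_add_subset he hSE)
  obtain ⟨s, hs⟩ := hS
  refine eq_univ_of_forall fun x ↦ ?_
  have hx : x - s ∈ AddAction.stabilizer G S := hstab (hE ▸ AddSubgroup.mem_top _)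
  rw [← AddAction.mem_stabilizer_iff.1 hx]
  exact mem_vadd_finset.2 ⟨s, hs, sub_add_cancel x s⟩

theorem min_card_le_card_add_add_of_add_subset (h0E : (0 : G) ∈ E)
    (hE : AddSubgroup.closure (E : Set G) = ⊤) (hS : S.Nonempty) (h0T : (0 : G) ∈ T)
    (hST : S + T ⊆ S) : min (Fintype.card G) (#S + #T) ≤ #(S + T + E) := by
  have hSE_sub : S + E ⊆ S + T + E := add_subset_add_right (subset_add_left S h0T)
  by_cases hSE : S + E ⊆ S
  · calc min (Fintype.card G) (#S + #T) ≤ Fintype.card G := min_le_left _ _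
      _ = #S := by rw [eq_univ_of_add_subset hE hS hSE, card_univ]
      _ ≤ #(S + T + E) := card_le_card ((subset_add_left S h0E).trans hSE_sub)
  -- `T` stabilises `S`, so it translates a point of `(S + E) \ S` inside `(S + E) \ S`.
  obtain ⟨x, hxSE, hxS⟩ := not_subset.1 hSE
  have hxT : x +ᵥ T ⊆ (S + E) \ S := by
    intro y hy
    obtain ⟨t, ht, rfl⟩ := mem_vadd_finset.1 hy
    refine mem_sdiff.2 ⟨?_, fun hxt ↦ hxS ?_⟩
    · have hSET : S + E + T ⊆ S + E := by
        rw [add_right_comm]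
        exact add_subset_add_right hST
      exact hSET (vadd_finset_subset_add hxSE (vadd_mem_vadd_finset ht))
    · rw [← vadd_finset_eq_self_of_add_subset ht hST, vadd_eq_add, add_comm] at hxt
      exact (vadd_mem_vadd_finset_iff _).1 hxt
  calc min (Fintype.card G) (#S + #T) ≤ #S + #T := min_le_right _ _
    _ ≤ #S + #((S + E) \ S) := by grw [← hxT, card_vadd_finset]
    _ = #(S + E) := by rw [add_comm, card_sdiff_add_card_eq_card (subset_add_left S h0E)]
    _ ≤ #(S + T + E) := card_le_card hSE_sub

theorem min_card_le_card_add_add (h0E : (0 : G) ∈ E)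
    (hE : AddSubgroup.closure (E : Set G) = ⊤) (hS : S.Nonempty) (h0T : (0 : G) ∈ T) :
    min (Fintype.card G) (#S + #T) ≤ #(S + T + E) := by
  induction hn : #T using Nat.strong_induction_on generalizing S T with
  | _ n ih =>
  subst hn
  by_cases hST : S + T ⊆ S
  · exact min_card_le_card_add_add_of_add_subset h0E hE hS h0T hST
  obtain ⟨_, hst, hstS⟩ := not_subset.1 hST
  obtain ⟨s, hs, t, ht, rfl⟩ := mem_add.1 hst
  set D := addDysonETransform s (S, T)
  have hD₂ : #D.2 < #T := by
    refine card_lt_card ⟨inter_subset_left, fun hsub ↦ hstS ?_⟩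
    obtain ⟨u, hu, hsu⟩ := mem_vadd_finset.1 (mem_of_mem_inter_right (hsub ht))
    rw [← hsu, vadd_eq_add, add_neg_cancel_left]
    exact hu
  have h0D₂ : (0 : G) ∈ D.2 := mem_inter.2 ⟨h0T, mem_vadd_finset.2 ⟨s, hs, neg_add_cancel s⟩⟩
  calc min (Fintype.card G) (#S + #T) = min (Fintype.card G) (#D.1 + #D.2) := by
        rw [addDysonETransform.card]
    _ ≤ #(D.1 + D.2 + E) := ih _ hD₂ (hS.mono subset_union_left) h0D₂ rfl
    _ ≤ #(S + T + E) := card_le_card (add_subset_add_right (addDysonETransform.subset _ _))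

theorem three_mul_card_le (h0E : (0 : G) ∈ E) (hE : AddSubgroup.closure (E : Set G) = ⊤)
    (hS : Disjoint (S + S + E) S) : 3 * #S ≤ Fintype.card G := by
  obtain rfl | ⟨s, hs⟩ := S.eq_empty_or_nonempty
  · simp
  have hcard : #(S + (-s +ᵥ S) + E) = #(S + S + E) := by
    rw [add_vadd_comm, vadd_add_assoc, card_vadd_finset]
  have h := min_card_le_card_add_add h0E hE ⟨s, hs⟩
    (mem_vadd_finset.2 ⟨s, hs, neg_add_cancel s⟩ : (0 : G) ∈ -s +ᵥ S)
  rw [hcard, card_vadd_finset] at h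
  have hunion := card_le_univ (S + S + E ∪ S)
  rw [card_union_of_disjoint hS] at hunion
  have := card_pos.2 ⟨s, hs⟩
  omega

end SmoothedCauchyDavenport

open Set Metric
open scoped Finset

theorem dist_coe_le (p x y : ℝ) : dist (x : AddCircle p) y ≤ |x - y| := by
  rw [dist_eq_norm, ← AddCircle.coe_sub]
  exact QuotientAddGroup.norm_mk_le_norm

theorem volume_coe_image_Icc_le {p : ℝ} [Fact (0 < p)] (a b : ℝ) :
    volume (((↑) : ℝ → AddCircle p) '' Icc a b) ≤ ENNReal.ofReal (b - a) := by
  have hsub : ((↑) : ℝ → AddCircle p) '' Icc a b ⊆ closedBall (↑((a + b) / 2)) ((b - a) / 2) := by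
    rintro _ ⟨x, ⟨hax, hxb⟩, rfl⟩
    refine mem_closedBall.2 ((dist_coe_le p _ _).trans ?_)
    rw [abs_le]
    constructor <;> linarith
  calc _ ≤ _ := measure_mono hsub
    _ = ENNReal.ofReal (min p (2 * ((b - a) / 2))) := AddCircle.volume_closedBall _ _
    _ ≤ ENNReal.ofReal (b - a) := by
      rw [mul_div_cancel₀ _ two_ne_zero]
      exact ENNReal.ofReal_le_ofReal (min_le_right _ _)

section Cells

variable {ι : Type*} {n : ℕ}

def arc (n : ℕ) : Set UnitAddCircle := ((↑) : ℝ → UnitAddCircle) '' Icc 0 (1 / n)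

def box (n : ℕ) : Set (UnitAddTorus ι) := univ.pi fun _ ↦ arc n

def cell (n : ℕ) [NeZero n] (s : ι → ZMod n) : Set (UnitAddTorus ι) :=
  ZMod.toAddCircle.compLeft ι s +ᵥ box n

open Classical in
noncomputable def boxLatticePoints [Fintype ι] (n : ℕ) [NeZero n] : Finset (ι → ZMod n) :=
  Finset.univ.filter fun e ↦ ZMod.toAddCircle.compLeft ι e ∈ box n

open Classical in
noncomputable def cellsMeeting [Fintype ι] (n : ℕ) [NeZero n] (K : Set (UnitAddTorus ι)) :
    Finset (ι → ZMod n) :=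
  Finset.univ.filter fun s ↦ (cell n s ∩ K).Nonempty

theorem zero_mem_arc : (0 : UnitAddCircle) ∈ arc n :=
  ⟨0, ⟨le_rfl, by positivity⟩, QuotientAddGroup.mk_zero _⟩

theorem dist_le_of_mem_box [Fintype ι] {x y : UnitAddTorus ι} (hx : x ∈ box n)
    (hy : y ∈ box n) : dist x y ≤ 1 / n := by
  refine (dist_pi_le_iff (by positivity)).2 fun i ↦ ?_
  obtain ⟨u, ⟨hu0, hu1⟩, hu⟩ := hx i (mem_univ i)
  obtain ⟨v, ⟨hv0, hv1⟩, hv⟩ := hy i (mem_univ i)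
  rw [← hu, ← hv]
  refine (dist_coe_le 1 u v).trans ?_
  rw [abs_le]
  constructor <;> linarith

variable [NeZero n]

theorem toAddCircle_one_mem_arc : ZMod.toAddCircle (1 : ZMod n) ∈ arc n :=
  ⟨1 / n, ⟨by positivity, le_rfl⟩, by simpa using (ZMod.toAddCircle_natCast (N := n) 1).symm⟩

theorem volume_arc_le : volume (arc n) ≤ (n : ℝ≥0∞)⁻¹ :=
  calc volume (arc n) ≤ ENNReal.ofReal (1 / n - 0) := volume_coe_image_Icc_le _ _
    _ = (n : ℝ≥0∞)⁻¹ := by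
      rw [sub_zero, one_div, ENNReal.ofReal_inv_of_pos (Nat.cast_pos.2 (NeZero.pos n)),
        ENNReal.ofReal_natCast]

theorem exists_sub_mem_arc (y : UnitAddCircle) :
    ∃ j : ZMod n, y - ZMod.toAddCircle j ∈ arc n := by
  obtain ⟨t, rfl⟩ := QuotientAddGroup.mk_surjective y
  have hn : (0 : ℝ) < n := Nat.cast_pos.2 (NeZero.pos n)
  have h₁ := Int.floor_le ((n : ℝ) * t)
  have h₂ := Int.lt_floor_add_one ((n : ℝ) * t)
  refine ⟨⌊(n : ℝ) * t⌋, t - ⌊(n : ℝ) * t⌋ / n, ⟨?_, ?_⟩, ?_⟩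
  · rw [sub_nonneg, div_le_iff₀ hn]
    linarith
  · rw [sub_le_iff_le_add, ← add_div, le_div_iff₀ hn]
    linarith
  · rw [ZMod.toAddCircle_intCast]
    rfl

theorem exists_mem_cell (x : UnitAddTorus ι) : ∃ s : ι → ZMod n, x ∈ cell n s := by
  choose s hs using fun i ↦ exists_sub_mem_arc (n := n) (x i)
  refine ⟨s, mem_vadd_set_iff_neg_vadd_mem.2 fun i _ ↦ ?_⟩
  simpa [neg_add_eq_sub] using hs i

variable [Fintype ι]

theorem dist_le_of_mem_cell {s : ι → ZMod n} {x y : UnitAddTorus ι} (hx : x ∈ cell n s)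
    (hy : y ∈ cell n s) : dist x y ≤ 1 / n := by
  obtain ⟨x', hx', rfl⟩ := hx
  obtain ⟨y', hy', rfl⟩ := hy
  simp only [vadd_eq_add, dist_add_left]
  exact dist_le_of_mem_box hx' hy'

theorem volume_cell_le (s : ι → ZMod n) :
    volume (cell n s) ≤ ((n : ℝ≥0∞) ^ Fintype.card ι)⁻¹ := by
  rw [cell, measure_vadd, box, volume_pi_pi, ENNReal.inv_pow]
  exact (Finset.prod_le_prod' fun _ _ ↦ volume_arc_le).trans_eq (by simp)

theorem volume_biUnion_cell_le (S : Finset (ι → ZMod n)) :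
    volume (⋃ s ∈ S, cell n s) ≤ #S / (n : ℝ≥0∞) ^ Fintype.card ι :=
  calc volume (⋃ s ∈ S, cell n s) ≤ ∑ s ∈ S, volume (cell n s) := measure_biUnion_finset_le _ _
    _ ≤ ∑ _s ∈ S, ((n : ℝ≥0∞) ^ Fintype.card ι)⁻¹ :=
      Finset.sum_le_sum fun s _ ↦ volume_cell_le s
    _ = #S / (n : ℝ≥0∞) ^ Fintype.card ι := by
      rw [Finset.sum_const, nsmul_eq_mul, div_eq_mul_inv]

theorem mem_boxLatticePoints {e : ι → ZMod n} :
    e ∈ boxLatticePoints n ↔ ZMod.toAddCircle.compLeft ι e ∈ box n := by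
  classical
  simp [boxLatticePoints]

theorem zero_mem_boxLatticePoints : (0 : ι → ZMod n) ∈ boxLatticePoints n :=
  mem_boxLatticePoints.2 fun _ _ ↦ by simpa using zero_mem_arc

theorem closure_boxLatticePoints :
    AddSubgroup.closure ((boxLatticePoints n : Finset (ι → ZMod n)) : Set (ι → ZMod n)) = ⊤ := by
  classical
  have hsingle (i : ι) : Pi.single i (1 : ZMod n) ∈ boxLatticePoints n := by
    refine mem_boxLatticePoints.2 fun j _ ↦ ?_
    obtain rfl | hji := eq_or_ne j i
    · simpa using toAddCircle_one_mem_arc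
    · simpa [Pi.single_eq_of_ne hji] using zero_mem_arc
  refine eq_top_iff.2 fun g _ ↦ ?_
  rw [← Finset.univ_sum_single g]
  refine AddSubgroup.sum_mem _ fun i _ ↦ ?_
  have hg : Pi.single i (g i) = (g i).val • (Pi.single i (1 : ZMod n) : ι → ZMod n) := by
    rw [← Pi.single_smul, nsmul_one, ZMod.natCast_zmod_val]
  rw [hg]
  exact AddSubgroup.nsmul_mem _ (AddSubgroup.subset_closure (hsingle i)) _

theorem cell_add_subset {s t e : ι → ZMod n} (he : e ∈ boxLatticePoints n) :
    cell n (s + t + e) ⊆ cell n s + cell n t := by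
  have hsum : cell n s + cell n t = ZMod.toAddCircle.compLeft ι (s + t) +ᵥ (box n + box n) := by
    rw [cell, cell, vadd_add_assoc, add_vadd_comm, vadd_vadd, map_add]
  rw [hsum, cell, map_add, ← vadd_vadd]
  exact vadd_set_mono (vadd_set_subset_add (mem_boxLatticePoints.1 he))

theorem mem_cellsMeeting {K : Set (UnitAddTorus ι)} {s : ι → ZMod n} :
    s ∈ cellsMeeting n K ↔ (cell n s ∩ K).Nonempty := by
  classical
  simp [cellsMeeting]

theorem subset_biUnion_cellsMeeting (K : Set (UnitAddTorus ι)) :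
    K ⊆ ⋃ s ∈ cellsMeeting n K, cell n s := fun x hx ↦ by
  obtain ⟨s, hs⟩ := exists_mem_cell (n := n) x
  exact mem_biUnion (mem_cellsMeeting.2 ⟨x, hs, hx⟩) hs

theorem disjoint_cellsMeeting_add_add {K : Set (UnitAddTorus ι)} {δ : ℝ}
    (hK : Disjoint (cthickening δ (K + K)) (cthickening δ K)) (hn : 2 / n ≤ δ) :
    Disjoint (cellsMeeting n K + cellsMeeting n K + boxLatticePoints n) (cellsMeeting n K) := by
  classical
  refine Finset.disjoint_left.2 fun u hu huK ↦ ?_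
  obtain ⟨_, hst, e, he, rfl⟩ := Finset.mem_add.1 hu
  obtain ⟨s, hs, t, ht, rfl⟩ := Finset.mem_add.1 hst
  obtain ⟨x, hxs, hxK⟩ := mem_cellsMeeting.1 hs
  obtain ⟨y, hyt, hyK⟩ := mem_cellsMeeting.1 ht
  obtain ⟨z, hzu, hzK⟩ := mem_cellsMeeting.1 huK
  obtain ⟨x', hx's, y', hy't, rfl⟩ := cell_add_subset he hzu
  have hdist : dist (x' + y') (x + y) ≤ δ :=
    calc dist (x' + y') (x + y) ≤ dist x' x + dist y' y := dist_add_add_le _ _ _ _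
      _ ≤ 1 / n + 1 / n :=
        add_le_add (dist_le_of_mem_cell hx's hxs) (dist_le_of_mem_cell hy't hyt)
      _ = 2 / n := by ring
      _ ≤ δ := hn
  exact Set.disjoint_left.1 hK (mem_cthickening_of_dist_le _ _ _ _ (add_mem_add hxK hyK) hdist)
    (self_subset_cthickening K hzK)

theorem volume_le_third_of_disjoint_cthickening {K : Set (UnitAddTorus ι)} {δ : ℝ}
    (hK : Disjoint (cthickening δ (K + K)) (cthickening δ K)) (hn : 2 / n ≤ δ) :
    volume K ≤ 1 / 3 := by
  classical
  have hcard : 3 * #(cellsMeeting n K) ≤ n ^ Fintype.card ι := by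
    have hdisj := disjoint_cellsMeeting_add_add hK hn
    have h := three_mul_card_le zero_mem_boxLatticePoints closure_boxLatticePoints hdisj
    rwa [Fintype.card_fun, ZMod.card] at h
  have hnpow : (n : ℝ≥0∞) ^ Fintype.card ι ≠ 0 := pow_ne_zero _ (by simp [NeZero.ne n])
  calc volume K ≤ volume (⋃ s ∈ cellsMeeting n K, cell n s) :=
        measure_mono (subset_biUnion_cellsMeeting K)
    _ ≤ #(cellsMeeting n K) / (n : ℝ≥0∞) ^ Fintype.card ι := volume_biUnion_cell_le _
    _ ≤ 1 / 3 := by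
      rw [ENNReal.div_le_iff hnpow (by simp), one_div, ← ENNReal.div_eq_inv_mul,
        ENNReal.le_div_iff_mul_le (by simp) (by simp)]
      exact_mod_cast (by linarith : #(cellsMeeting n K) * 3 ≤ n ^ Fintype.card ι)

end Cells

variable {ι : Type*} [Fintype ι]

theorem volume_le_third_of_isCompact {K : Set (UnitAddTorus ι)} (hK : IsCompact K)
    (hKK : Disjoint (K + K) K) : volume K ≤ 1 / 3 := by
  obtain ⟨δ, hδ, hKδ⟩ := hKK.exists_cthickenings (hK.add hK) hK.isClosed
  obtain ⟨m, hm⟩ := exists_nat_one_div_lt (half_pos hδ)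
  refine volume_le_third_of_disjoint_cthickening (n := m + 1) hKδ ?_
  rw [Nat.cast_succ]
  linarith [(by ring : 2 / ((m : ℝ) + 1) = 2 * (1 / (m + 1)))]

theorem volume_le_third_of_disjoint_add_self {A : Set (UnitAddTorus ι)} (hA : MeasurableSet A)
    (hAA : Disjoint (A + A) A) : volume A ≤ 1 / 3 := by
  rw [hA.measure_eq_iSup_isCompact]
  exact iSup₂_le fun K hKA ↦ iSup_le fun hK ↦
    volume_le_third_of_isCompact hK (hAA.mono (add_subset_add hKA hKA) hKA)

theorem disjoint_ball_add_ball {E : Type*} [SeminormedAddCommGroup E] {c : E} {r : ℝ}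
    (hc : c + c = 0) (hr : 3 * r ≤ ‖c‖) : Disjoint (ball c r + ball c r) (ball c r) := by
  refine Set.disjoint_left.2 ?_
  rintro _ ⟨a, ha, b, hb, rfl⟩ hab
  rw [mem_ball_iff_norm] at ha hb hab
  have hsum : ‖a + b‖ < 2 * r :=
    calc ‖a + b‖ = ‖(a - c) + (b - c)‖ := by
          rw [show (a - c) + (b - c) = a + b - (c + c) by abel, hc, sub_zero]
      _ ≤ ‖a - c‖ + ‖b - c‖ := norm_add_le _ _
      _ < 2 * r := by linarith
  have := norm_le_norm_add_norm_sub' c (a + b)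
  rw [norm_sub_rev] at this
  linarith

instance : IsProbabilityMeasure (volume : Measure UnitAddCircle) :=
  ⟨by simp [AddCircle.measure_univ]⟩

theorem exists_disjoint_add_self_volume_eq_third [Nonempty ι] :
    ∃ A : Set (UnitAddTorus ι), MeasurableSet A ∧ Disjoint (A + A) A ∧ volume A = 1 / 3 := by
  have hhalf : (↑((1 : ℝ) / 2) + ↑((1 : ℝ) / 2) : UnitAddCircle) = 0 := by
    rw [← AddCircle.coe_add, add_halves, AddCircle.coe_period]
  have hnorm : ‖(↑((1 : ℝ) / 2) : UnitAddCircle)‖ = 1 / 2 := by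
    rw [AddCircle.norm_half_period_eq, abs_one]
  obtain ⟨i⟩ := ‹Nonempty ι›
  let π : UnitAddTorus ι →+ UnitAddCircle := Pi.evalAddMonoidHom _ i
  refine ⟨π ⁻¹' ball (↑((1 : ℝ) / 2)) (1 / 6),
    measurableSet_ball.preimage (measurable_pi_apply i), ?_, ?_⟩
  · exact ((disjoint_ball_add_ball hhalf (by rw [hnorm]; norm_num)).preimage π).mono_left
      (preimage_add_preimage_subset π)
  · have hπ : MeasurePreserving π := measurePreserving_eval (fun _ ↦ volume) i
    rw [hπ.measure_preimage measurableSet_ball.nullMeasurableSet,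
      ← measure_congr AddCircle.closedBall_ae_eq_ball, AddCircle.volume_closedBall,
      show min 1 (2 * (1 / 6)) = (1 : ℝ) / 3 by norm_num, ENNReal.ofReal_div_of_pos (by norm_num)]
    simp

end TorusSumFree

/-- The supremal measure of a measurable sum-free subset of the `k`-dimensional torus
`𝕋^k = (ℝ/ℤ)^k` equals `1/3`. -/
theorem torus_sum_free_sup_measure (k : ℕ) (hk : 1 ≤ k) :
    (⨆ (A : Set (Fin k → AddCircle (1 : ℝ)))
        (_ : MeasurableSet A ∧ (A + A) ∩ A = ∅), volume A) = 1 / 3 := by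
  have : Nonempty (Fin k) := ⟨⟨0, hk⟩⟩
  obtain ⟨A, hA, hAA, hvol⟩ := TorusSumFree.exists_disjoint_add_self_volume_eq_third (ι := Fin k)
  refine le_antisymm (iSup₂_le fun B hB ↦ ?_) ?_
  · exact TorusSumFree.volume_le_third_of_disjoint_add_self hB.1
      (Set.disjoint_iff_inter_eq_empty.2 hB.2)
  · exact hvol ▸ le_iSup₂_of_le A ⟨hA, Set.disjoint_iff_inter_eq_empty.1 hAA⟩ le_rfl
end
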